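/- arXiv:2303.03690 — 3 statements merged into one kernel-verified Lean document; each statement's English description precedes it below -/
import Mathlib

section
/- (Discrete gradient structure of the L1 formula.) For any real sequence v_1, …, v_n with 1 ≤ n ≤ N, it holds that 2 v_n Σ_{j=1}^{n} a^{(n)}_{n−j} v_j ≥ a^{(n)}_0 v_n² + Σ_{k=1}^{n} p^{(n)}_{n−k} (Σ_{j=1}^{k} a^{(k)}_{k−j} v_j)² − Σ_{k=1}^{n−1} p^{(n−1)}_{n−1−k} (Σ_{j=1}^{k} a^{(k)}_{k−j} v_j)². -/
open scoped BigOperators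

/-- ω_β(t) = t^{β-1}/Γ(β) -/
noncomputable def omegaK (β t : ℝ) : ℝ := t ^ (β - 1) / Real.Gamma β

/-- variable-step L1 kernel: `aK α t n k = a^{(n)}_{n-k}` for `1 ≤ k ≤ n`. -/
noncomputable def aK (α : ℝ) (t : ℕ → ℝ) (n k : ℕ) : ℝ :=
  (1 / (t k - t (k - 1))) * ∫ s in (t (k - 1))..(t k), omegaK (1 - α) (t n - s)

/-- DCC kernel: `pK α t n m = p^{(n)}_m`, i.e. `p^{(n)}_{n-k} = pK α t n (n-k)`;
`p^{(n)}_0 = 1/a^{(n)}_0` and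
`p^{(n)}_{n-k} = (1/a^{(k)}_0) Σ_{j=k+1}^n (a^{(j)}_{j-k-1} - a^{(j)}_{j-k}) p^{(n)}_{n-j}`. -/
noncomputable def pK (α : ℝ) (t : ℕ → ℝ) (n : ℕ) : ℕ → ℝ
  | 0 => 1 / aK α t n n
  | m + 1 =>
      (1 / aK α t (n - m - 1) (n - m - 1)) *
        ∑ i ∈ (Finset.range (m + 1)).attach,
          (aK α t (n - i.1) (n - m) - aK α t (n - i.1) (n - m - 1)) * pK α t n i.1
  decreasing_by exact Finset.mem_range.mp i.2

/-!
Write `G_k = ∑_{j ≤ k} a^{(k)}_{k-j} v_j`. The DCC identities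
`∑_{k=j}^{n} p^{(n)}_{n-k} a^{(k)}_{k-j} = 1` at levels `n` and `n - 1` show that
`θ_k = a^{(n)}_0 (p^{(n-1)}_{n-1-k} - p^{(n)}_{n-k})` solves the triangular system
`∑_{k=j}^{n-1} θ_k a^{(k)}_{k-j} = a^{(n)}_{n-j}`, so the history part `S` of the L1 sum at `t_n`
is `∑ θ_k G_k`. Since `ω_{1-α}` is decreasing and log-convex, the kernels are positive, decrease
in `n`, and satisfy `a^{(k)}_{k-j} a^{(n)}_{n-j-1} ≤ a^{(n)}_{n-j} a^{(k)}_{k-j-1}`; back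
substitution then gives `θ_k ≥ 0` and `∑ θ_k ≤ 1`. By Cauchy–Schwarz `S² ≤ ∑ θ_k G_k²`, and after
expanding `G_n = S + a^{(n)}_0 v_n` the claim is exactly `(S² - ∑ θ_k G_k²) / a^{(n)}_0 ≤ 0`.
-/

open MeasureTheory Finset

section Omega

variable {α : ℝ}

lemma omegaK_one_sub (x : ℝ) : omegaK (1 - α) x = x ^ (-α) / Real.Gamma (1 - α) := by
  rw [omegaK, sub_sub_cancel_left]

lemma omegaK_nonneg (hα1 : α < 1) {x : ℝ} (hx : 0 ≤ x) : 0 ≤ omegaK (1 - α) x := by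
  rw [omegaK_one_sub]
  exact div_nonneg (Real.rpow_nonneg hx _) (Real.Gamma_pos_of_pos (by linarith)).le

lemma omegaK_pos (hα1 : α < 1) {x : ℝ} (hx : 0 < x) : 0 < omegaK (1 - α) x := by
  rw [omegaK_one_sub]
  exact div_pos (Real.rpow_pos_of_pos hx _) (Real.Gamma_pos_of_pos (by linarith))

lemma omegaK_antitoneOn (hα0 : 0 ≤ α) (hα1 : α < 1) :
    AntitoneOn (omegaK (1 - α)) (Set.Ioi 0) := by
  intro x hx y _ hxy
  simp only [omegaK_one_sub]
  exact div_le_div_of_nonneg_right (Real.rpow_le_rpow_of_nonpos hx hxy (by linarith))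
    (Real.Gamma_pos_of_pos (by linarith)).le

lemma omegaK_mul_omegaK_add_le (hα0 : 0 ≤ α) (hα1 : α < 1) {u u' w : ℝ} (hu : 0 < u)
    (huu' : u ≤ u') (hw : 0 ≤ w) :
    omegaK (1 - α) u' * omegaK (1 - α) (u + w) ≤ omegaK (1 - α) u * omegaK (1 - α) (u' + w) := by
  simp only [omegaK_one_sub, div_mul_div_comm]
  have hΓ : 0 < Real.Gamma (1 - α) := Real.Gamma_pos_of_pos (by linarith)
  refine div_le_div_of_nonneg_right ?_ (mul_pos hΓ hΓ).le
  rw [← Real.mul_rpow (by linarith) (by linarith), ← Real.mul_rpow hu.le (by linarith)]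
  exact Real.rpow_le_rpow_of_nonpos (mul_pos hu (by linarith)) (by nlinarith) (by linarith)

lemma intervalIntegrable_omegaK_sub (hα1 : α < 1) (c a b : ℝ) :
    IntervalIntegrable (fun s => omegaK (1 - α) (c - s)) volume a b := by
  have h : IntervalIntegrable (fun x : ℝ => x ^ (-α)) volume (c - a) (c - b) :=
    intervalIntegral.intervalIntegrable_rpow' (by linarith)
  simpa only [omegaK_one_sub, sub_sub_cancel] using
    (h.comp_sub_left c).div_const (Real.Gamma (1 - α))

end Omega

/-- `g / f` crosses the level `μ / κ` from above at `b`. -/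
lemma integral_mul_integral_le_of_cross {f g : ℝ → ℝ} {a b c κ μ : ℝ} (hab : a ≤ b)
    (hbc : b ≤ c) (hκ : 0 < κ) (hf : ∀ s ∈ Set.Icc a c, 0 ≤ f s)
    (hfi : IntervalIntegrable f volume a c) (hgi : IntervalIntegrable g volume a c)
    (hleft : ∀ s ∈ Set.Icc a b, μ * f s ≤ κ * g s)
    (hright : ∀ s ∈ Set.Ioo b c, κ * g s ≤ μ * f s) :
    (∫ s in a..b, f s) * ∫ s in b..c, g s ≤ (∫ s in a..b, g s) * ∫ s in b..c, f s := by
  have hb : b ∈ Set.uIcc a c := Set.mem_uIcc.2 (Or.inl ⟨hab, hbc⟩)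
  have hsub₁ : Set.uIcc a b ⊆ Set.uIcc a c := Set.uIcc_subset_uIcc_left hb
  have hsub₂ : Set.uIcc b c ⊆ Set.uIcc a c := Set.uIcc_subset_uIcc_right hb
  have hf₁ : 0 ≤ ∫ s in a..b, f s :=
    intervalIntegral.integral_nonneg hab fun s hs => hf s ⟨hs.1, hs.2.trans hbc⟩
  have hf₂ : 0 ≤ ∫ s in b..c, f s :=
    intervalIntegral.integral_nonneg hbc fun s hs => hf s ⟨hab.trans hs.1, hs.2⟩
  have hright' : κ * ∫ s in b..c, g s ≤ μ * ∫ s in b..c, f s := by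
    simp only [← intervalIntegral.integral_const_mul]
    exact intervalIntegral.integral_mono_on_of_le_Ioo hbc
      ((hgi.mono_set hsub₂).const_mul κ) ((hfi.mono_set hsub₂).const_mul μ) hright
  have hleft' : μ * ∫ s in a..b, f s ≤ κ * ∫ s in a..b, g s := by
    simp only [← intervalIntegral.integral_const_mul]
    exact intervalIntegral.integral_mono_on hab
      ((hfi.mono_set hsub₁).const_mul μ) ((hgi.mono_set hsub₁).const_mul κ) hleft
  refine le_of_mul_le_mul_left ?_ hκ
  calc κ * ((∫ s in a..b, f s) * ∫ s in b..c, g s)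
      = (∫ s in a..b, f s) * (κ * ∫ s in b..c, g s) := by ring
    _ ≤ (∫ s in a..b, f s) * (μ * ∫ s in b..c, f s) := by gcongr
    _ = (μ * ∫ s in a..b, f s) * ∫ s in b..c, f s := by ring
    _ ≤ (κ * ∫ s in a..b, g s) * ∫ s in b..c, f s := by gcongr
    _ = κ * ((∫ s in a..b, g s) * ∫ s in b..c, f s) := by ring

section Kernel

variable {α : ℝ} {t : ℕ → ℝ}

lemma aK_pos (hα1 : α < 1) {m k : ℕ} (hk : t (k - 1) < t k) (hkm : t k ≤ t m) :
    0 < aK α t m k :=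
  mul_pos (one_div_pos.2 (sub_pos.2 hk))
    (intervalIntegral.intervalIntegral_pos_of_pos_on (intervalIntegrable_omegaK_sub hα1 _ _ _)
      (fun s hs => omegaK_pos hα1 (by linarith [hs.2])) hk)

lemma aK_le_aK (hα0 : 0 ≤ α) (hα1 : α < 1) {j k n : ℕ} (hj : t (j - 1) < t j)
    (hjk : t j ≤ t k) (hkn : t k ≤ t n) : aK α t n j ≤ aK α t k j := by
  refine mul_le_mul_of_nonneg_left ?_ (one_div_pos.2 (sub_pos.2 hj)).le
  refine intervalIntegral.integral_mono_on_of_le_Ioo hj.le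
    (intervalIntegrable_omegaK_sub hα1 _ _ _) (intervalIntegrable_omegaK_sub hα1 _ _ _) ?_
  intro s hs
  exact omegaK_antitoneOn hα0 hα1 (Set.mem_Ioi.2 (by linarith [hs.2]))
    (Set.mem_Ioi.2 (by linarith [hs.2])) (by linarith)

lemma aK_mul_aK_le (hα0 : 0 ≤ α) (hα1 : α < 1) {j k n : ℕ} (h₀ : t (j - 1) < t j)
    (h₁ : t j < t (j + 1)) (h₂ : t (j + 1) ≤ t k) (h₃ : t k ≤ t n) :
    aK α t k j * aK α t n (j + 1) ≤ aK α t n j * aK α t k (j + 1) := by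
  have hshift : ∀ s, t k - s + (t n - t k) = t n - s := fun s => by ring
  have key := integral_mul_integral_le_of_cross h₀.le h₁.le
    (omegaK_pos hα1 (sub_pos.2 (h₁.trans_le h₂)) (x := t k - t j))
    (fun s hs => omegaK_nonneg hα1 (by linarith [hs.2]))
    (intervalIntegrable_omegaK_sub hα1 (t k) _ _) (intervalIntegrable_omegaK_sub hα1 (t n) _ _)
    (μ := omegaK (1 - α) (t n - t j))
    (fun s hs => by
      have := omegaK_mul_omegaK_add_le hα0 hα1 (u := t k - t j) (u' := t k - s)
        (w := t n - t k) (by linarith) (by linarith [hs.2]) (by linarith)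
      rwa [hshift, hshift, mul_comm (omegaK (1 - α) (t k - s))] at this)
    (fun s hs => by
      have := omegaK_mul_omegaK_add_le hα0 hα1 (u := t k - s) (u' := t k - t j)
        (w := t n - t k) (by linarith [hs.2]) (by linarith [hs.1]) (by linarith)
      rwa [hshift, hshift, mul_comm (omegaK (1 - α) (t k - s))] at this)
  simp only [aK, Nat.add_sub_cancel, one_div_mul_eq_div, div_mul_div_comm]
  exact div_le_div_of_nonneg_right (by linarith [key])
    (mul_nonneg (sub_pos.2 h₀).le (sub_pos.2 h₁).le)

end Kernel

lemma sq_sum_mul_le_sum_mul_sq {ι : Type*} (s : Finset ι) {θ : ι → ℝ} (G : ι → ℝ)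
    (hθ : ∀ i ∈ s, 0 ≤ θ i) (hsum : ∑ i ∈ s, θ i ≤ 1) :
    (∑ i ∈ s, θ i * G i) ^ 2 ≤ ∑ i ∈ s, θ i * G i ^ 2 := by
  have hE : 0 ≤ ∑ i ∈ s, θ i * G i ^ 2 :=
    sum_nonneg fun i hi => mul_nonneg (hθ i hi) (sq_nonneg _)
  calc (∑ i ∈ s, θ i * G i) ^ 2 ≤ (∑ i ∈ s, θ i) * ∑ i ∈ s, θ i * G i ^ 2 :=
        sum_sq_le_sum_mul_sum_of_sq_le_mul s hθ (fun i hi => mul_nonneg (hθ i hi) (sq_nonneg _))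
          fun i _ => le_of_eq (by ring)
    _ ≤ ∑ i ∈ s, θ i * G i ^ 2 := mul_le_of_le_one_left hE hsum

section TriangularSystem

variable {a : ℕ → ℕ → ℝ} {b θ : ℕ → ℝ} {m : ℕ}

lemma sum_mul_eq_sum_mul_sum_of_triangular
    (hsys : ∀ j ∈ Icc 1 m, ∑ k ∈ Icc j m, θ k * a k j = b j) (v : ℕ → ℝ) :
    ∑ j ∈ Icc 1 m, b j * v j = ∑ k ∈ Icc 1 m, θ k * ∑ j ∈ Icc 1 k, a k j * v j :=
  calc ∑ j ∈ Icc 1 m, b j * v j = ∑ j ∈ Icc 1 m, ∑ k ∈ Icc j m, θ k * a k j * v j :=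
        sum_congr rfl fun j hj => by rw [← hsys j hj, sum_mul]
    _ = ∑ k ∈ Icc 1 m, ∑ j ∈ Icc 1 k, θ k * a k j * v j :=
        sum_comm' fun j k => by simp only [mem_Icc]; omega
    _ = ∑ k ∈ Icc 1 m, θ k * ∑ j ∈ Icc 1 k, a k j * v j := by simp only [mul_sum, mul_assoc]

lemma sum_Ioc_mul_le_of_triangular
    (hsys : ∀ j ∈ Icc 1 m, ∑ k ∈ Icc j m, θ k * a k j = b j) (hb : ∀ j ∈ Icc 1 m, 0 < b j)
    (hratio : ∀ j k, 1 ≤ j → j < k → k ≤ m → a k j * b (j + 1) ≤ b j * a k (j + 1))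
    {j : ℕ} (hj : j ∈ Icc 1 m) (hθ : ∀ k ∈ Ioc j m, 0 ≤ θ k) :
    ∑ k ∈ Ioc j m, θ k * a k j ≤ b j := by
  obtain ⟨hj1, hjm⟩ := mem_Icc.1 hj
  rcases hjm.eq_or_lt with rfl | hjm
  · simpa using (hb j hj).le
  have hnext : j + 1 ∈ Icc 1 m := mem_Icc.2 ⟨by omega, hjm⟩
  have hsys' : ∑ k ∈ Ioc j m, θ k * a k (j + 1) = b (j + 1) := by
    rw [← Icc_add_one_left_eq_Ioc, hsys _ hnext]
  refine le_of_mul_le_mul_right ?_ (hb _ hnext)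
  calc (∑ k ∈ Ioc j m, θ k * a k j) * b (j + 1) = ∑ k ∈ Ioc j m, θ k * (a k j * b (j + 1)) := by
        rw [sum_mul]; simp only [mul_assoc]
    _ ≤ ∑ k ∈ Ioc j m, θ k * (b j * a k (j + 1)) := by
        refine sum_le_sum fun k hk => ?_
        obtain ⟨hjk, hkm⟩ := mem_Ioc.1 hk
        exact mul_le_mul_of_nonneg_left (hratio j k hj1 hjk hkm) (hθ k hk)
    _ = b j * b (j + 1) := by rw [← hsys', mul_sum]; simp only [mul_left_comm]

lemma nonneg_of_triangular
    (hsys : ∀ j ∈ Icc 1 m, ∑ k ∈ Icc j m, θ k * a k j = b j) (hdiag : ∀ j ∈ Icc 1 m, 0 < a j j)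
    (hb : ∀ j ∈ Icc 1 m, 0 < b j)
    (hratio : ∀ j k, 1 ≤ j → j < k → k ≤ m → a k j * b (j + 1) ≤ b j * a k (j + 1)) :
    ∀ k ∈ Icc 1 m, 0 ≤ θ k := by
  suffices h : ∀ j ≤ m + 1, ∀ k ∈ Icc (max j 1) m, 0 ≤ θ k by simpa using h 1 (by omega)
  intro j hj
  induction hj using Nat.decreasingInduction with
  | self => intro k hk; simp only [mem_Icc] at hk; omega
  | of_succ j hj ih =>
    intro k hk
    obtain ⟨hjk, hkm⟩ := mem_Icc.1 hk
    rcases (le_of_max_le_left hjk).eq_or_lt with rfl | hjk'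
    · have hj1 : j ∈ Icc 1 m := mem_Icc.2 ⟨le_of_max_le_right hjk, hkm⟩
      have htail := sum_Ioc_mul_le_of_triangular hsys hb hratio hj1
        fun i hi => ih i (mem_Icc.2 ⟨by simp only [mem_Ioc] at hi; omega, (mem_Ioc.1 hi).2⟩)
      have hrow := hsys j hj1
      rw [← add_sum_Ioc_eq_sum_Icc hkm] at hrow
      exact nonneg_of_mul_nonneg_left (by linarith) (hdiag j hj1)
    · exact ih k (mem_Icc.2 ⟨by omega, hkm⟩)

lemma sum_le_one_of_triangular
    (hsys : ∀ j ∈ Icc 1 m, ∑ k ∈ Icc j m, θ k * a k j = b j) (hθ : ∀ k ∈ Icc 1 m, 0 ≤ θ k)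
    (hb : 0 < b 1) (hrow : ∀ k ∈ Icc 1 m, b 1 ≤ a k 1) :
    ∑ k ∈ Icc 1 m, θ k ≤ 1 := by
  rcases Nat.eq_zero_or_pos m with rfl | hm
  · simp
  refine le_of_mul_le_mul_right ?_ hb
  calc (∑ k ∈ Icc 1 m, θ k) * b 1 ≤ ∑ k ∈ Icc 1 m, θ k * a k 1 := by
        rw [sum_mul]
        exact sum_le_sum fun k hk => mul_le_mul_of_nonneg_left (hrow k hk) (hθ k hk)
    _ = 1 * b 1 := by rw [one_mul, hsys 1 (mem_Icc.2 ⟨le_rfl, hm⟩)]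

end TriangularSystem

section DCC

variable (α : ℝ) (t : ℕ → ℝ)

lemma pK_sub (m j : ℕ) (hj : j < m) :
    pK α t m (m - j) = 1 / aK α t j j *
      ∑ k ∈ Ioc j m, (aK α t k (j + 1) - aK α t k j) * pK α t m (m - k) := by
  obtain ⟨d, hd⟩ : ∃ d, m - j = d + 1 := ⟨m - j - 1, by omega⟩
  rw [hd, pK, show m - d - 1 = j by omega, show m - d = j + 1 by omega,
    sum_attach (range (d + 1)) fun i => (aK α t (m - i) (j + 1) - aK α t (m - i) j) * pK α t m i]
  congr 1
  refine sum_nbij' (fun i => m - i) (fun k => m - k) ?_ ?_ ?_ ?_ ?_ <;>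
    intro i hi <;> simp only [mem_range, mem_Ioc] at hi
  · exact mem_Ioc.2 (by omega)
  · exact mem_range.2 (by omega)
  all_goals rw [Nat.sub_sub_self (by omega)]

lemma sum_pK_mul_aK {m j : ℕ} (hjm : j ≤ m) (ha : ∀ k ∈ Icc j m, aK α t k k ≠ 0) :
    ∑ k ∈ Icc j m, pK α t m (m - k) * aK α t k j = 1 := by
  induction hjm using Nat.decreasingInduction with
  | self => simp [pK, ha m (by simp)]
  | of_succ j hjm ih =>
    have hj : aK α t j j ≠ 0 := ha j (mem_Icc.2 ⟨le_rfl, hjm.le⟩)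
    rw [← add_sum_Ioc_eq_sum_Icc hjm.le, pK_sub α t m j hjm, one_div_mul_eq_div,
      div_mul_cancel₀ _ hj, ← sum_add_distrib, ← Icc_add_one_left_eq_Ioc,
      ← ih fun k hk => ha k (Icc_subset_Icc_left j.le_succ hk)]
    exact sum_congr rfl fun k _ => by ring

noncomputable def dccWeight (m k : ℕ) : ℝ :=
  aK α t (m + 1) (m + 1) * (pK α t m (m - k) - pK α t (m + 1) (m + 1 - k))

lemma sum_dccWeight_mul_aK {m j : ℕ} (hjm : j ≤ m) (ha : ∀ k ∈ Icc j (m + 1), aK α t k k ≠ 0) :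
    ∑ k ∈ Icc j m, dccWeight α t m k * aK α t k j = aK α t (m + 1) j := by
  have hnew := sum_pK_mul_aK α t (by omega : j ≤ m + 1) ha
  have hold := sum_pK_mul_aK α t hjm fun k hk => ha k (Icc_subset_Icc_right m.le_succ hk)
  rw [sum_Icc_succ_top (by omega), Nat.sub_self, pK] at hnew
  simp only [dccWeight, mul_assoc, ← mul_sum, sub_mul, sum_sub_distrib, hold]
  field_simp [ha (m + 1) (mem_Icc.2 ⟨by omega, le_rfl⟩)] at hnew ⊢
  linarith

lemma sum_pK_mul_sq_sub (G : ℕ → ℝ) {m : ℕ} (ha : aK α t (m + 1) (m + 1) ≠ 0) :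
    ∑ k ∈ Icc 1 (m + 1), pK α t (m + 1) (m + 1 - k) * G k ^ 2
        - ∑ k ∈ Icc 1 m, pK α t m (m - k) * G k ^ 2 =
      (G (m + 1) ^ 2 - ∑ k ∈ Icc 1 m, dccWeight α t m k * G k ^ 2) / aK α t (m + 1) (m + 1) := by
  rw [sum_Icc_succ_top (by omega), Nat.sub_self, pK]
  simp only [dccWeight, mul_assoc, ← mul_sum, sub_mul, sum_sub_distrib]
  field_simp
  ring

end DCC

section Mesh

variable {α : ℝ} {t : ℕ → ℝ} {N m : ℕ}

lemma aK_pos_of_strictMonoOn (hα1 : α < 1) (ht : StrictMonoOn t (Set.Iic N)) {k : ℕ}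
    (hk : 1 ≤ k) (hkm : k ≤ m) (hm : m ≤ N) : 0 < aK α t m k :=
  aK_pos hα1 (ht (Set.mem_Iic.2 (by omega)) (Set.mem_Iic.2 (by omega)) (by omega))
    (ht.monotoneOn (Set.mem_Iic.2 (by omega)) (Set.mem_Iic.2 hm) hkm)

lemma sum_dccWeight_mul_aK_of_strictMonoOn (hα1 : α < 1) (ht : StrictMonoOn t (Set.Iic N))
    (hm : m + 1 ≤ N) :
    ∀ j ∈ Icc 1 m, ∑ k ∈ Icc j m, dccWeight α t m k * aK α t k j = aK α t (m + 1) j :=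
  fun j hj => sum_dccWeight_mul_aK α t (mem_Icc.1 hj).2 fun k hk =>
    (aK_pos_of_strictMonoOn hα1 ht (by simp only [mem_Icc] at hj hk; omega) le_rfl
      (by simp only [mem_Icc] at hk; omega)).ne'

lemma dccWeight_nonneg (hα0 : 0 ≤ α) (hα1 : α < 1) (ht : StrictMonoOn t (Set.Iic N))
    (hm : m + 1 ≤ N) : ∀ k ∈ Icc 1 m, 0 ≤ dccWeight α t m k := by
  have hmem : ∀ {i}, i ≤ N → i ∈ Set.Iic N := Set.mem_Iic.2
  refine nonneg_of_triangular (sum_dccWeight_mul_aK_of_strictMonoOn hα1 ht hm)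
    (fun j hj => ?_) (fun j hj => ?_) fun j k hj hjk hkm => ?_
  · obtain ⟨hj1, hjm⟩ := mem_Icc.1 hj
    exact aK_pos_of_strictMonoOn hα1 ht hj1 le_rfl (by omega)
  · obtain ⟨hj1, hjm⟩ := mem_Icc.1 hj
    exact aK_pos_of_strictMonoOn hα1 ht hj1 (by omega) hm
  · exact aK_mul_aK_le hα0 hα1 (ht (hmem (by omega)) (hmem (by omega)) (by omega))
      (ht (hmem (by omega)) (hmem (by omega)) (by omega))
      (ht.monotoneOn (hmem (by omega)) (hmem (by omega)) hjk)
      (ht.monotoneOn (hmem (by omega)) (hmem hm) (by omega))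

lemma sum_dccWeight_le_one (hα0 : 0 ≤ α) (hα1 : α < 1) (ht : StrictMonoOn t (Set.Iic N))
    (hm : m + 1 ≤ N) : ∑ k ∈ Icc 1 m, dccWeight α t m k ≤ 1 := by
  have hmem : ∀ {i}, i ≤ N → i ∈ Set.Iic N := Set.mem_Iic.2
  refine sum_le_one_of_triangular (sum_dccWeight_mul_aK_of_strictMonoOn hα1 ht hm)
    (dccWeight_nonneg hα0 hα1 ht hm) (aK_pos_of_strictMonoOn hα1 ht le_rfl (by omega) hm)
    fun k hk => ?_
  obtain ⟨hk1, hkm⟩ := mem_Icc.1 hk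
  exact aK_le_aK hα0 hα1 (ht (hmem (by omega)) (hmem (by omega)) (by omega))
    (ht.monotoneOn (hmem (by omega)) (hmem (by omega)) hk1)
    (ht.monotoneOn (hmem (by omega)) (hmem hm) (by omega))

end Mesh

theorem L1_discrete_gradient_structure_general
    (N : ℕ) (α : ℝ) (hα : 0 < α ∧ α < 1)
    (t : ℕ → ℝ)
    (htmono : ∀ k, k < N → t k < t (k + 1))
    (n : ℕ) (hn1 : 1 ≤ n) (hnN : n ≤ N) (v : ℕ → ℝ) :
    2 * v n * ∑ j ∈ Finset.Icc 1 n, aK α t n j * v j ≥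
      aK α t n n * (v n) ^ 2
        + ∑ k ∈ Finset.Icc 1 n,
            pK α t n (n - k) * (∑ j ∈ Finset.Icc 1 k, aK α t k j * v j) ^ 2
        - ∑ k ∈ Finset.Icc 1 (n - 1),
            pK α t (n - 1) (n - 1 - k) * (∑ j ∈ Finset.Icc 1 k, aK α t k j * v j) ^ 2 := by
  obtain ⟨hα0, hα1⟩ := hα
  obtain ⟨m, rfl⟩ : ∃ m, n = m + 1 := ⟨n - 1, by omega⟩
  have ht : StrictMonoOn t (Set.Iic N) := strictMonoOn_Iic_of_lt_succ htmono
  set a₀ := aK α t (m + 1) (m + 1)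
  have ha₀ : 0 < a₀ := aK_pos_of_strictMonoOn hα1 ht hn1 le_rfl hnN
  set G : ℕ → ℝ := fun k => ∑ j ∈ Icc 1 k, aK α t k j * v j
  set S := ∑ j ∈ Icc 1 m, aK α t (m + 1) j * v j
  set E := ∑ k ∈ Icc 1 m, dccWeight α t m k * G k ^ 2
  have hG : G (m + 1) = S + a₀ * v (m + 1) := sum_Icc_succ_top (by omega) _
  have hCS : S ^ 2 ≤ E := by
    have hS : S = ∑ k ∈ Icc 1 m, dccWeight α t m k * G k :=
      sum_mul_eq_sum_mul_sum_of_triangular (sum_dccWeight_mul_aK_of_strictMonoOn hα1 ht hnN) v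
    rw [hS]
    exact sq_sum_mul_le_sum_mul_sq _ G (dccWeight_nonneg hα0.le hα1 ht hnN)
      (sum_dccWeight_le_one hα0.le hα1 ht hnN)
  rw [Nat.add_sub_cancel, ge_iff_le, add_sub_assoc]
  calc _ = a₀ * v (m + 1) ^ 2 + (G (m + 1) ^ 2 - E) / a₀ := by
        rw [← sum_pK_mul_sq_sub α t G ha₀.ne']
    _ ≤ a₀ * v (m + 1) ^ 2 + (G (m + 1) ^ 2 - S ^ 2) / a₀ := by gcongr
    _ = 2 * v (m + 1) * G (m + 1) := by rw [hG]; field_simp; ring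

/-- Lemma 3.1, discrete gradient structure of the L1 formula:
for any real sequence `v_1,…,v_n` with `1 ≤ n ≤ N`,
`2 v_n Σ_{j=1}^n a^{(n)}_{n-j} v_j ≥ a^{(n)}_0 v_n² + Σ_{k=1}^n p^{(n)}_{n-k} (Σ_{j=1}^k a^{(k)}_{k-j} v_j)²
 - Σ_{k=1}^{n-1} p^{(n-1)}_{n-1-k} (Σ_{j=1}^k a^{(k)}_{k-j} v_j)²`.
Here `a^{(n)}_{n-j} = aK α t n j`, `a^{(n)}_0 = aK α t n n`, `p^{(n)}_{n-k} = pK α t n (n-k)`. -/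
theorem L1_discrete_gradient_structure
    (N : ℕ) (α : ℝ) (hα : 0 < α ∧ α < 1) (T : ℝ)
    (t : ℕ → ℝ) (ht0 : t 0 = 0) (htN : t N = T)
    (htmono : ∀ k, k < N → t k < t (k + 1))
    (n : ℕ) (hn1 : 1 ≤ n) (hnN : n ≤ N) (v : ℕ → ℝ) :
    2 * v n * ∑ j ∈ Finset.Icc 1 n, aK α t n j * v j ≥
      aK α t n n * (v n) ^ 2
        + ∑ k ∈ Finset.Icc 1 n,
            pK α t n (n - k) * (∑ j ∈ Finset.Icc 1 k, aK α t k j * v j) ^ 2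
        - ∑ k ∈ Finset.Icc 1 (n - 1),
            pK α t (n - 1) (n - 1 - k) * (∑ j ∈ Finset.Icc 1 k, aK α t k j * v j) ^ 2 :=
  L1_discrete_gradient_structure_general N α hα t htmono n hn1 hnN v
end

section
/- (L∞ boundedness of the numerical solution, Lemma 3.3.) Let g ≥ 0, ε > 0 and suppose the maximum time step satisfies τ^α ≤ 3/(Γ(2−α)(4g² + 3ε)). If u⁰, …, u^N ∈ V_h solve the variable-step L1 scheme, then for every n ≥ 1, ‖u^n‖_∞ ≤ C̃_Ω √( 4E[u⁰] + (9/7)(1+ε+g²)² L² ), where C̃_Ω is the constant in the discrete embedding inequality ‖v‖_∞ ≤ C̃_Ω(‖v‖ + ‖(1+Δ_h)v‖). In particular the numerical solution is bounded in the maximum norm by a mesh-independent constant c₀. -/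
/-!
The scheme dissipates the discrete energy. Convexity splitting of the potential gives
`E[uⁿ] - E[uⁿ⁻¹] ≤ ⟨μⁿ, ∇uⁿ⟩ + ((g²/3 + ε)/2) ‖∇uⁿ‖²` with `∇uⁿ = uⁿ - uⁿ⁻¹`, and the scheme turns
`⟨μⁿ, ∇uⁿ⟩` into `-∑ₖ a⁽ⁿ⁾ₙ₋ₖ ⟨∇uᵏ, ∇uⁿ⟩`. Summed over `n`, this L1 memory term is a quadratic
form bounded below by `½ ∑ₙ a⁽ⁿ⁾₀ ‖∇uⁿ‖²`, and the step restriction gives `a⁽ⁿ⁾₀ ≥ g²/3 + ε`,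
so `E[uⁿ] ≤ E[u⁰]`. The lower bound on the quadratic form comes from
`ω_{1-α}(r) = ∫₀^∞ e^{-rl} l^{α-1} dl / (Γ(α)Γ(1-α))`: for each `l` the kernel factors as
`e^{-l tₙ} · cₖ(l) e^{-l tₖ}` with `cₖ(l)` nonnegative and nondecreasing in `k` (convexity of
`exp`), and such triangular forms dominate half their diagonal.

Finally a pointwise quartic inequality gives
`2‖v‖² + 2‖(1+Δ_h)v‖² ≤ 4E[v] + (9/7)(1+ε+g²)² L²`, and the embedding inequality turns this into
the `L∞` bound.
-/

open scoped BigOperators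

/-- discrete Laplacian on `L`-periodic grid functions (indices mod `M`) -/
noncomputable def dLap (M : ℕ) (h : ℝ) (v : ZMod M → ZMod M → ℝ) : ZMod M → ZMod M → ℝ :=
  fun i j => (v (i + 1) j + v (i - 1) j + v i (j + 1) + v i (j - 1) - 4 * v i j) / h ^ 2

/-- discrete inner product ⟨v,w⟩ = h² Σ_{ij} v_{ij} w_{ij} -/
noncomputable def dInner (M : ℕ) [NeZero M] (h : ℝ) (v w : ZMod M → ZMod M → ℝ) : ℝ :=
  h ^ 2 * ∑ i : ZMod M, ∑ j : ZMod M, v i j * w i j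

/-- discrete L² norm -/
noncomputable def dNorm (M : ℕ) [NeZero M] (h : ℝ) (v : ZMod M → ZMod M → ℝ) : ℝ :=
  Real.sqrt (dInner M h v v)

/-- the operator (1+Δ_h) -/
noncomputable def opA (M : ℕ) (h : ℝ) (v : ZMod M → ZMod M → ℝ) : ZMod M → ZMod M → ℝ :=
  v + dLap M h v

/-- pointwise nonlinearity f(u) = u³ - g u² - ε u -/
noncomputable def fPt (g ε : ℝ) (M : ℕ) (v : ZMod M → ZMod M → ℝ) : ZMod M → ZMod M → ℝ :=
  fun i j => (v i j) ^ 3 - g * (v i j) ^ 2 - ε * v i j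

/-- discrete energy E[v] = ½‖(1+Δ_h)v‖² + ¼‖v‖₄⁴ - (g/3)⟨v²,v⟩ - (ε/2)‖v‖² -/
noncomputable def dEnergy (M : ℕ) [NeZero M] (h g ε : ℝ) (v : ZMod M → ZMod M → ℝ) : ℝ :=
  (1 / 2) * dInner M h (opA M h v) (opA M h v)
    + (1 / 4) * (h ^ 2 * ∑ i : ZMod M, ∑ j : ZMod M, |v i j| ^ 4)
    - (g / 3) * dInner M h (fun i j => (v i j) ^ 2) v
    - (ε / 2) * dInner M h v v

/-- chemical potential μ = (1+Δ_h)² v + f(v) -/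
noncomputable def muSH (M : ℕ) (h g ε : ℝ) (v : ZMod M → ZMod M → ℝ) : ZMod M → ZMod M → ℝ :=
  opA M h (opA M h v) + fPt g ε M v

open Finset

lemma sum_Icc_eq_add_sum_Icc_succ {M : Type*} [AddCommMonoid M] (f : ℕ → M) {j m : ℕ}
    (h : j ≤ m) : ∑ n ∈ Icc j m, f n = f j + ∑ n ∈ Icc (j + 1) m, f n := by
  rw [← add_sum_Ioc_eq_sum_Icc h, Icc_add_one_left_eq_Ioc]

lemma sum_Icc_one_sub_pred {G : Type*} [AddCommGroup G] (f : ℕ → G) (m : ℕ) :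
    ∑ n ∈ Icc 1 m, (f n - f (n - 1)) = f m - f 0 := by
  induction m with
  | zero => simp
  | succ m ih => rw [sum_Icc_succ_top (by omega), ih, Nat.add_sub_cancel]; abel

-- Strengthened for a backward induction on `j`: the square absorbs the increment `c (j+1) - c j`.
lemma half_sum_mul_sq_add_le_sum_mul_sum_Icc (c v : ℕ → ℝ) {j m : ℕ} (hj : j ≤ m + 1)
    (hc : ∀ k, j ≤ k → k < m → c k ≤ c (k + 1)) :
    (1 / 2) * ∑ n ∈ Icc j m, c n * v n ^ 2 + (1 / 2) * c j * (∑ n ∈ Icc j m, v n) ^ 2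
      ≤ ∑ n ∈ Icc j m, v n * ∑ k ∈ Icc j n, c k * v k := by
  induction hj using Nat.decreasingInduction with
  | self => simp
  | of_succ j hjm ih =>
    have hj : j ≤ m := Nat.lt_succ_iff.mp hjm
    set S := ∑ n ∈ Icc (j + 1) m, v n
    have ih := ih fun k hk hkm => hc k (by omega) hkm
    have hpeel : ∑ n ∈ Icc (j + 1) m, v n * ∑ k ∈ Icc j n, c k * v k
        = c j * v j * S + ∑ n ∈ Icc (j + 1) m, v n * ∑ k ∈ Icc (j + 1) n, c k * v k := by
      rw [mul_sum, ← sum_add_distrib]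
      refine sum_congr rfl fun n hn => ?_
      rw [sum_Icc_eq_add_sum_Icc_succ _ (by simp at hn; omega)]
      ring
    have hS : c j * S ^ 2 ≤ c (j + 1) * S ^ 2 := by
      rcases Nat.lt_or_ge j m with hlt | hge
      · exact mul_le_mul_of_nonneg_right (hc j le_rfl hlt) (sq_nonneg S)
      · simp [S, Icc_eq_empty_of_lt (Nat.lt_succ_of_le hge)]
    rw [sum_Icc_eq_add_sum_Icc_succ _ hj, sum_Icc_eq_add_sum_Icc_succ _ hj,
      sum_Icc_eq_add_sum_Icc_succ _ hj, hpeel, Icc_self, sum_singleton]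
    nlinarith

lemma half_sum_mul_sq_le_sum_mul_sum_Icc (c v : ℕ → ℝ) {m : ℕ}
    (hc0 : ∀ k, 1 ≤ k → k ≤ m → 0 ≤ c k) (hc : ∀ k, 1 ≤ k → k < m → c k ≤ c (k + 1)) :
    (1 / 2) * ∑ n ∈ Icc 1 m, c n * v n ^ 2 ≤ ∑ n ∈ Icc 1 m, v n * ∑ k ∈ Icc 1 n, c k * v k := by
  have key := half_sum_mul_sq_add_le_sum_mul_sum_Icc c v (by omega : 1 ≤ m + 1) hc
  rcases Nat.eq_zero_or_pos m with rfl | hm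
  · simp
  · nlinarith [sq_nonneg (∑ n ∈ Icc 1 m, v n), hc0 1 le_rfl hm]

lemma opA_sub {M : ℕ} {h : ℝ} (v w : ZMod M → ZMod M → ℝ) :
    opA M h (v - w) = opA M h v - opA M h w := by
  funext i j
  simp only [opA, dLap, Pi.sub_apply, Pi.add_apply]
  ring

section GridInner

variable {M : ℕ} [NeZero M] {h : ℝ}

lemma dInner_comm (v w : ZMod M → ZMod M → ℝ) : dInner M h v w = dInner M h w v := by
  simp only [dInner, mul_comm (v _ _)]

lemma dInner_self_nonneg (v : ZMod M → ZMod M → ℝ) : 0 ≤ dInner M h v v :=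
  mul_nonneg (sq_nonneg h) (sum_nonneg fun _ _ => sum_nonneg fun _ _ => mul_self_nonneg _)

lemma dInner_add_left (u v w : ZMod M → ZMod M → ℝ) :
    dInner M h (u + v) w = dInner M h u w + dInner M h v w := by
  simp only [dInner, Pi.add_apply, add_mul, sum_add_distrib, mul_add]

lemma dInner_add_right (u v w : ZMod M → ZMod M → ℝ) :
    dInner M h u (v + w) = dInner M h u v + dInner M h u w := by
  rw [dInner_comm, dInner_add_left, dInner_comm v, dInner_comm w]

lemma dInner_sub_left (u v w : ZMod M → ZMod M → ℝ) :
    dInner M h (u - v) w = dInner M h u w - dInner M h v w := by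
  simp only [dInner, Pi.sub_apply, sub_mul, sum_sub_distrib, mul_sub]

lemma dInner_sub_right (u v w : ZMod M → ZMod M → ℝ) :
    dInner M h u (v - w) = dInner M h u v - dInner M h u w := by
  rw [dInner_comm, dInner_sub_left, dInner_comm v, dInner_comm w]

lemma dInner_neg_left (u w : ZMod M → ZMod M → ℝ) : dInner M h (-u) w = -dInner M h u w := by
  simp only [dInner, Pi.neg_apply, neg_mul, sum_neg_distrib, mul_neg]

lemma dInner_smul_left (r : ℝ) (u w : ZMod M → ZMod M → ℝ) :
    dInner M h (r • u) w = r * dInner M h u w := by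
  simp only [dInner, Pi.smul_apply, smul_eq_mul, mul_assoc, ← mul_sum]
  ring

lemma dInner_sum_left {ι : Type*} (s : Finset ι) (F : ι → ZMod M → ZMod M → ℝ)
    (w : ZMod M → ZMod M → ℝ) : dInner M h (∑ k ∈ s, F k) w = ∑ k ∈ s, dInner M h (F k) w := by
  classical
  induction s using Finset.induction_on with
  | empty => simp [dInner]
  | insert a s ha ih => rw [sum_insert ha, sum_insert ha, dInner_add_left, ih]

lemma half_dInner_self_sub_le (v w : ZMod M → ZMod M → ℝ) :
    (1 / 2) * dInner M h v v - (1 / 2) * dInner M h w w ≤ dInner M h v (v - w) := by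
  have := dInner_self_nonneg (h := h) (v - w)
  rw [dInner_sub_left, dInner_sub_right, dInner_sub_right, dInner_comm w v] at this
  rw [dInner_sub_right]
  linarith

lemma sum_neighbours_mul_comm (v w : ZMod M → ℝ) :
    ∑ i, (v (i + 1) + v (i - 1)) * w i = ∑ i, v i * (w (i + 1) + w (i - 1)) := by
  have h₁ : ∑ i, v (i + 1) * w i = ∑ i, v i * w (i - 1) := by
    simpa using (Equiv.sum_comp (Equiv.subRight (1 : ZMod M)) fun i => v (i + 1) * w i).symm
  have h₂ : ∑ i, v (i - 1) * w i = ∑ i, v i * w (i + 1) := by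
    simpa using (Equiv.sum_comp (Equiv.addRight (1 : ZMod M)) fun i => v (i - 1) * w i).symm
  simp only [add_mul, mul_add, sum_add_distrib, h₁, h₂, add_comm]

lemma dInner_dLap_left (v w : ZMod M → ZMod M → ℝ) :
    dInner M h (dLap M h v) w = dInner M h v (dLap M h w) := by
  have hrow : ∑ i, ∑ j, (v (i + 1) j + v (i - 1) j) * w i j
      = ∑ i, ∑ j, v i j * (w (i + 1) j + w (i - 1) j) := by
    rw [sum_comm, sum_comm (γ := ZMod M) (f := fun i j => v i j * _)]
    exact sum_congr rfl fun j _ => sum_neighbours_mul_comm (v · j) (w · j)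
  have hcol : ∑ i, ∑ j, (v i (j + 1) + v i (j - 1)) * w i j
      = ∑ i, ∑ j, v i j * (w i (j + 1) + w i (j - 1)) :=
    sum_congr rfl fun i _ => sum_neighbours_mul_comm (v i) (w i)
  have hl : ∀ i j, (v (i + 1) j + v (i - 1) j + v i (j + 1) + v i (j - 1) - 4 * v i j) * w i j
      = (v (i + 1) j + v (i - 1) j) * w i j + (v i (j + 1) + v i (j - 1)) * w i j
        - 4 * (v i j * w i j) := fun i j => by ring
  have hr : ∀ i j, v i j * (w (i + 1) j + w (i - 1) j + w i (j + 1) + w i (j - 1) - 4 * w i j)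
      = v i j * (w (i + 1) j + w (i - 1) j) + v i j * (w i (j + 1) + w i (j - 1))
        - 4 * (v i j * w i j) := fun i j => by ring
  simp only [dInner, dLap, div_mul_eq_mul_div, mul_div_assoc', ← sum_div, hl, hr, sum_add_distrib,
    sum_sub_distrib, ← mul_sum, hrow, hcol]

lemma dInner_opA_left (v w : ZMod M → ZMod M → ℝ) :
    dInner M h (opA M h v) w = dInner M h v (opA M h w) := by
  simp only [opA, dInner_add_left, dInner_add_right, dInner_dLap_left]

end GridInner

noncomputable def shPotential (g ε x : ℝ) : ℝ := x ^ 4 / 4 - g / 3 * x ^ 3 - ε / 2 * x ^ 2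

lemma shPotential_sub_le (g ε x y : ℝ) :
    shPotential g ε x - shPotential g ε y
      ≤ (x ^ 3 - g * x ^ 2 - ε * x) * (x - y) + (g ^ 2 / 3 + ε) / 2 * ((x - y) * (x - y)) := by
  unfold shPotential
  nlinarith [sq_nonneg ((x - y) * (x + y - 2 * g / 3)), sq_nonneg ((x - y) * (x - g / 3))]

lemma two_mul_sq_le_shPotential (g ε x : ℝ) :
    2 * (x * x) ≤ 4 * shPotential g ε x + 9 / 7 * (1 + ε + g ^ 2) ^ 2 := by
  unfold shPotential
  nlinarith [sq_nonneg (x ^ 2 - 3 * g * x), sq_nonneg (7 * x ^ 2 - 9 * (1 + ε + g ^ 2))]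

section Energy

variable {M : ℕ} [NeZero M] {h : ℝ} (g ε : ℝ)

lemma dEnergy_eq_sum_shPotential (v : ZMod M → ZMod M → ℝ) :
    dEnergy M h g ε v
      = 1 / 2 * dInner M h (opA M h v) (opA M h v) + h ^ 2 * ∑ i, ∑ j, shPotential g ε (v i j) := by
  have habs : ∀ x : ℝ, |x| ^ 4 = x ^ 4 := fun x => by rw [← abs_pow, abs_of_nonneg (by positivity)]
  simp only [dEnergy, dInner, shPotential, habs, mul_sum, ← sum_sub_distrib, ← sum_add_distrib]
  exact sum_congr rfl fun i _ => sum_congr rfl fun j _ => by ring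

lemma dEnergy_sub_le (u w : ZMod M → ZMod M → ℝ) :
    dEnergy M h g ε u - dEnergy M h g ε w
      ≤ dInner M h (muSH M h g ε u) (u - w) + (g ^ 2 / 3 + ε) / 2 * dInner M h (u - w) (u - w) := by
  have hquad := half_dInner_self_sub_le (h := h) (opA M h u) (opA M h w)
  have hpot : h ^ 2 * ∑ i, ∑ j, shPotential g ε (u i j) - h ^ 2 * ∑ i, ∑ j, shPotential g ε (w i j)
      ≤ dInner M h (fPt g ε M u) (u - w) + (g ^ 2 / 3 + ε) / 2 * dInner M h (u - w) (u - w) := by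
    simp only [dInner, fPt, Pi.sub_apply, ← mul_sub, ← sum_sub_distrib, mul_left_comm _ (h ^ 2),
      ← mul_add, ← sum_add_distrib, mul_sum]
    gcongr with i _ j _
    exact shPotential_sub_le g ε _ _
  rw [dEnergy_eq_sum_shPotential, dEnergy_eq_sum_shPotential, muSH, dInner_add_left,
    dInner_opA_left (opA M h u), opA_sub]
  linarith

lemma two_dInner_add_le_dEnergy (v : ZMod M → ZMod M → ℝ) :
    2 * dInner M h v v + 2 * dInner M h (opA M h v) (opA M h v)
      ≤ 4 * dEnergy M h g ε v + 9 / 7 * (1 + ε + g ^ 2) ^ 2 * (M * h) ^ 2 := by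
  have hconst : h ^ 2 * ∑ _i : ZMod M, ∑ _j : ZMod M, 9 / 7 * (1 + ε + g ^ 2) ^ 2
      = 9 / 7 * (1 + ε + g ^ 2) ^ 2 * (M * h) ^ 2 := by
    simp only [sum_const, card_univ, ZMod.card, nsmul_eq_mul]
    ring
  have hpot : 2 * dInner M h v v
      ≤ 4 * (h ^ 2 * ∑ i, ∑ j, shPotential g ε (v i j))
        + h ^ 2 * ∑ _i : ZMod M, ∑ _j : ZMod M, 9 / 7 * (1 + ε + g ^ 2) ^ 2 :=
    calc 2 * dInner M h v v = h ^ 2 * ∑ i, ∑ j, 2 * (v i j * v i j) := by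
          rw [dInner, mul_left_comm]; simp only [mul_sum]
      _ ≤ h ^ 2 * ∑ i, ∑ j, (4 * shPotential g ε (v i j) + 9 / 7 * (1 + ε + g ^ 2) ^ 2) := by
          gcongr with i _ j _
          exact two_mul_sq_le_shPotential g ε (v i j)
      _ = _ := by simp only [sum_add_distrib, mul_add, ← mul_sum]; ring
  rw [dEnergy_eq_sum_shPotential, ← hconst]
  linarith

end Energy

section L1Kernel

open MeasureTheory Set Real

lemma aK_eq_rpow {α : ℝ} (hα1 : α < 1) (t : ℕ → ℝ) (n k : ℕ) :
    aK α t n k = ((t n - t (k - 1)) ^ (1 - α) - (t n - t k) ^ (1 - α))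
      / ((1 - α) * Gamma (1 - α) * (t k - t (k - 1))) := by
  have hω : ∀ s, omegaK (1 - α) (t n - s) = (fun x : ℝ => x ^ (-α) / Gamma (1 - α)) (t n - s) :=
    fun s => by simp only [omegaK, sub_sub_cancel_left]
  simp only [aK, hω]
  rw [intervalIntegral.integral_comp_sub_left (fun x : ℝ => x ^ (-α) / Gamma (1 - α)) (t n),
    intervalIntegral.integral_div, integral_rpow (Or.inl (by linarith)),
    show -α + 1 = 1 - α by ring]
  field_simp

lemma aK_self {α : ℝ} (hα1 : α < 1) {t : ℕ → ℝ} {n : ℕ} (hτ : t (n - 1) < t n) :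
    aK α t n n = 1 / ((t n - t (n - 1)) ^ α * Gamma (2 - α)) := by
  have hpos : 0 < t n - t (n - 1) := by linarith
  have hΓ : Gamma (2 - α) = (1 - α) * Gamma (1 - α) := by
    rw [show 2 - α = (1 - α) + 1 by ring, Gamma_add_one (by linarith)]
  have hpow : (t n - t (n - 1)) ^ (1 - α) = (t n - t (n - 1)) * ((t n - t (n - 1)) ^ α)⁻¹ := by
    rw [show (1 : ℝ) - α = 1 + -α by ring, rpow_add hpos, rpow_one, rpow_neg hpos.le]
  have : Gamma (1 - α) ≠ 0 := (Gamma_pos_of_pos (by linarith)).ne'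
  have : (t n - t (n - 1)) ^ α ≠ 0 := (rpow_pos_of_pos hpos α).ne'
  rw [aK_eq_rpow hα1, sub_self, zero_rpow (by linarith), sub_zero, hpow, hΓ]
  field_simp

lemma div_three_le_aK_self {α : ℝ} (hα1 : α < 1) {t : ℕ → ℝ} {n : ℕ} (hτ : t (n - 1) < t n)
    {c : ℝ} (hc : 0 < c) (hstep : (t n - t (n - 1)) ^ α ≤ 3 / (Gamma (2 - α) * c)) :
    c / 3 ≤ aK α t n n := by
  have hΓ : 0 < Gamma (2 - α) := Gamma_pos_of_pos (by linarith)
  have hτα : 0 < (t n - t (n - 1)) ^ α := rpow_pos_of_pos (by linarith) α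
  rw [aK_self hα1 hτ, le_div_iff₀ (by positivity)]
  rw [le_div_iff₀ (by positivity)] at hstep
  linarith

lemma integral_exp_neg_mul {l : ℝ} (hl : l ≠ 0) (a b : ℝ) :
    ∫ s in a..b, exp (-(s * l)) = (exp (-(a * l)) - exp (-(b * l))) / l := by
  have hderiv : ∀ x ∈ uIcc a b, HasDerivAt (fun s => -exp (-(s * l)) / l) (exp (-(x * l))) x :=
    fun x _ =>
      ((hasDerivAt_mul_const l).fun_neg.exp.fun_neg.div_const l).congr_deriv (by field_simp)
  rw [intervalIntegral.integral_eq_sub_of_hasDerivAt hderiv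
    ((by fun_prop : Continuous fun s => exp (-(s * l))).intervalIntegrable _ _)]
  ring

lemma lintegral_Ioc_lintegral_Ioi_rpow_mul_exp {α : ℝ} (hα : 0 < α) (hα1 : α < 1) {a b : ℝ}
    (ha : 0 ≤ a) (hab : a ≤ b) :
    ∫⁻ s in Ioc a b, ∫⁻ l in Ioi (0 : ℝ), ENNReal.ofReal (l ^ (α - 1) * exp (-(s * l)))
      = ENNReal.ofReal (Gamma α * ((b ^ (1 - α) - a ^ (1 - α)) / (1 - α))) := by
  have hinner : ∀ s ∈ Ioc a b,
      ∫⁻ l in Ioi (0 : ℝ), ENNReal.ofReal (l ^ (α - 1) * exp (-(s * l)))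
        = ENNReal.ofReal (s ^ (-α) * Gamma α) := by
    intro s hs
    have hs0 : 0 < s := ha.trans_lt hs.1
    have hint : IntegrableOn (fun l : ℝ => l ^ (α - 1) * exp (-(s * l))) (Ioi 0) := by
      simpa using integrableOn_rpow_mul_exp_neg_mul_rpow (p := 1) (by linarith) one_pos hs0
    rw [← ofReal_integral_eq_lintegral_ofReal hint
      ((ae_restrict_iff' measurableSet_Ioi).2 (.of_forall fun l (hl : 0 < l) => by positivity)),
      integral_rpow_mul_exp_neg_mul_Ioi hα hs0, one_div, inv_rpow hs0.le, rpow_neg hs0.le]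
  have hint : IntegrableOn (fun s : ℝ => s ^ (-α) * Gamma α) (Ioc a b) :=
    ((intervalIntegrable_iff_integrableOn_Ioc_of_le hab).1
      (intervalIntegral.intervalIntegrable_rpow' (by linarith))).mul_const _
  rw [setLIntegral_congr_fun measurableSet_Ioc hinner, ← ofReal_integral_eq_lintegral_ofReal hint
    ((ae_restrict_iff' measurableSet_Ioc).2
      (.of_forall fun s hs => by have : 0 < s := ha.trans_lt hs.1; positivity)),
    ← intervalIntegral.integral_of_le hab, intervalIntegral.integral_mul_const,
    integral_rpow (Or.inl (by linarith)), show -α + 1 = 1 - α by ring, mul_comm]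

lemma integral_Ioc_rpow_mul_exp {α l : ℝ} (hl : 0 < l) {a b : ℝ} (hab : a ≤ b) :
    ∫ s in Ioc a b, l ^ (α - 1) * exp (-(s * l))
      = (exp (-(a * l)) - exp (-(b * l))) * l ^ (α - 2) := by
  rw [integral_const_mul, ← intervalIntegral.integral_of_le hab, integral_exp_neg_mul hl.ne',
    show α - 1 = (α - 2) + 1 by ring, rpow_add_one hl.ne']
  field_simp

/-- Tonelli applied to `Γ(α) s^{-α} = ∫₀^∞ l^{α-1} e^{-sl} dl`, integrated over `s ∈ (a, b]`. -/
lemma integral_Ioi_exp_sub_exp_mul_rpow {α : ℝ} (hα : 0 < α) (hα1 : α < 1) {a b : ℝ}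
    (ha : 0 ≤ a) (hab : a ≤ b) :
    IntegrableOn (fun l : ℝ => (exp (-(a * l)) - exp (-(b * l))) * l ^ (α - 2)) (Ioi 0) ∧
      ∫ l in Ioi (0 : ℝ), (exp (-(a * l)) - exp (-(b * l))) * l ^ (α - 2)
        = Gamma α * ((b ^ (1 - α) - a ^ (1 - α)) / (1 - α)) := by
  set F : ℝ → ℝ := fun l => (exp (-(a * l)) - exp (-(b * l))) * l ^ (α - 2)
  have hF_nonneg : 0 ≤ᵐ[volume.restrict (Ioi 0)] F :=
    (ae_restrict_iff' measurableSet_Ioi).2 <| .of_forall fun l (hl : 0 < l) =>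
      mul_nonneg (sub_nonneg.2 (exp_le_exp.2 (by nlinarith))) (rpow_nonneg hl.le _)
  have hF_meas : AEStronglyMeasurable F (volume.restrict (Ioi 0)) := by
    apply Measurable.aestronglyMeasurable; fun_prop
  have hlint : ∫⁻ l in Ioi (0 : ℝ), ENNReal.ofReal (F l)
      = ENNReal.ofReal (Gamma α * ((b ^ (1 - α) - a ^ (1 - α)) / (1 - α))) := by
    rw [← lintegral_Ioc_lintegral_Ioi_rpow_mul_exp hα hα1 ha hab,
      lintegral_lintegral_swap (by apply Measurable.aemeasurable; fun_prop)]
    refine setLIntegral_congr_fun measurableSet_Ioi fun l (hl : 0 < l) => ?_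
    rw [← ofReal_integral_eq_lintegral_ofReal (Continuous.integrableOn_Ioc (by fun_prop))
      (.of_forall fun s => by positivity), integral_Ioc_rpow_mul_exp hl hab]
  have hvalue : 0 ≤ Gamma α * ((b ^ (1 - α) - a ^ (1 - α)) / (1 - α)) :=
    mul_nonneg (Gamma_pos_of_pos hα).le (div_nonneg
      (sub_nonneg.2 (rpow_le_rpow ha hab (by linarith))) (by linarith))
  refine ⟨⟨hF_meas, ?_⟩, ?_⟩
  · rw [hasFiniteIntegral_iff_ofReal hF_nonneg, hlint]
    exact ENNReal.ofReal_lt_top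
  · rw [integral_eq_lintegral_of_nonneg_ae hF_nonneg hF_meas, hlint, ENNReal.toReal_ofReal hvalue]

end L1Kernel

section L1QuadraticForm

open MeasureTheory Real

/-- Averaging `ω_{1-α}(tₙ - s) = ∫₀^∞ e^{-(tₙ - s) l} l^{α-1} dl / (Γ(α)Γ(1-α))` over
`s ∈ [t_{k-1}, t_k]` gives `aK α t n k = ∫₀^∞ aKDensity α t n k l dl`. -/
noncomputable def aKDensity (α : ℝ) (t : ℕ → ℝ) (n k : ℕ) (l : ℝ) : ℝ :=
  l ^ (α - 2) / (Gamma α * Gamma (1 - α)) * exp (-(l * t n))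
    * ((exp (l * t k) - exp (l * t (k - 1))) / (t k - t (k - 1)))

lemma aKDensity_integrableOn_and_integral_eq {α : ℝ} (hα : 0 < α) (hα1 : α < 1)
    {t : ℕ → ℝ} {n k : ℕ} (hk : t (k - 1) < t k) (hkn : t k ≤ t n) :
    IntegrableOn (aKDensity α t n k) (Set.Ioi 0) ∧
      ∫ l in Set.Ioi (0 : ℝ), aKDensity α t n k l = aK α t n k := by
  obtain ⟨hint, hval⟩ := integral_Ioi_exp_sub_exp_mul_rpow hα hα1
    (sub_nonneg.2 hkn) (by linarith : t n - t k ≤ t n - t (k - 1))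
  have hΓ : Gamma (1 - α) ≠ 0 := (Gamma_pos_of_pos (by linarith)).ne'
  have hΓ' : Gamma α ≠ 0 := (Gamma_pos_of_pos hα).ne'
  have hτ : t k - t (k - 1) ≠ 0 := by linarith
  have hdens : aKDensity α t n k = fun l =>
      (exp (-((t n - t k) * l)) - exp (-((t n - t (k - 1)) * l))) * l ^ (α - 2)
        / ((t k - t (k - 1)) * Gamma α * Gamma (1 - α)) := by
    funext l
    rw [aKDensity, show -((t n - t k) * l) = -(l * t n) + l * t k by ring,
      show -((t n - t (k - 1)) * l) = -(l * t n) + l * t (k - 1) by ring, exp_add, exp_add]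
    field_simp
  refine ⟨hdens ▸ hint.div_const _, ?_⟩
  rw [hdens, integral_div, hval, aK_eq_rpow hα1]
  field_simp

lemma slope_exp_mul_le_slope {l x y z : ℝ} (hxy : x < y) (hyz : y < z) :
    (exp (l * y) - exp (l * x)) / (y - x) ≤ (exp (l * z) - exp (l * y)) / (z - y) := by
  simpa using (convexOn_exp.comp_linearMap (LinearMap.mul ℝ ℝ l)).slope_mono_adjacent
    (Set.mem_univ x) (Set.mem_univ z) hxy hyz

lemma half_sum_aKDensity_mul_sq_le {α : ℝ} (hα : 0 ≤ α) (hα1 : α ≤ 1) {t : ℕ → ℝ} {m : ℕ}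
    (ht : StrictMonoOn t (Set.Iic m)) (x : ℕ → ℝ) {l : ℝ} (hl : 0 ≤ l) :
    (1 / 2) * ∑ n ∈ Icc 1 m, aKDensity α t n n l * x n ^ 2
      ≤ ∑ n ∈ Icc 1 m, x n * ∑ k ∈ Icc 1 n, aKDensity α t n k l * x k := by
  set κ := l ^ (α - 2) / (Gamma α * Gamma (1 - α))
  set slope : ℕ → ℝ := fun k => (exp (l * t k) - exp (l * t (k - 1))) / (t k - t (k - 1))
  set c : ℕ → ℝ := fun k => exp (l * t k) * slope k
  set v : ℕ → ℝ := fun n => exp (-(l * t n)) * x n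
  have hstep : ∀ k, 1 ≤ k → k ≤ m → t (k - 1) < t k := fun k hk hkm =>
    ht (by simp; omega) (by simpa using hkm) (by omega)
  have hslope : ∀ k, 1 ≤ k → k ≤ m → 0 ≤ slope k := fun k hk hkm =>
    div_nonneg (sub_nonneg.2 (exp_le_exp.2 (mul_le_mul_of_nonneg_left (hstep k hk hkm).le hl)))
      (sub_nonneg.2 (hstep k hk hkm).le)
  have hc0 : ∀ k, 1 ≤ k → k ≤ m → 0 ≤ c k := fun k hk hkm =>
    mul_nonneg (exp_pos _).le (hslope k hk hkm)
  have hc : ∀ k, 1 ≤ k → k < m → c k ≤ c (k + 1) := by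
    intro k hk hkm
    have hnext : t k < t (k + 1) := by simpa using hstep (k + 1) (by omega) hkm
    refine mul_le_mul (exp_le_exp.2 (mul_le_mul_of_nonneg_left hnext.le hl)) ?_
      (hslope k hk hkm.le) (exp_pos _).le
    simpa [slope] using slope_exp_mul_le_slope (l := l) (hstep k hk hkm.le) hnext
  have hexp : ∀ k, exp (l * t k) * exp (-(l * t k)) = 1 := fun k => by rw [← exp_add]; simp
  have hoff : ∀ n k, x n * (aKDensity α t n k l * x k) = κ * (v n * (c k * v k)) := fun n k => by
    simp only [aKDensity, κ, v, c, slope]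
    linear_combination (-(κ * exp (-(l * t n)) * slope k * x n * x k)) * hexp k
  have hdiag : ∀ n, aKDensity α t n n l * x n ^ 2 = κ * (c n * v n ^ 2) := fun n => by
    simpa [sq, mul_assoc, mul_left_comm] using hoff n n
  have hκ : 0 ≤ κ := div_nonneg (rpow_nonneg hl _)
    (mul_nonneg (Gamma_nonneg_of_nonneg hα) (Gamma_nonneg_of_nonneg (by linarith)))
  calc (1 / 2) * ∑ n ∈ Icc 1 m, aKDensity α t n n l * x n ^ 2
      = κ * ((1 / 2) * ∑ n ∈ Icc 1 m, c n * v n ^ 2) := by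
        simp only [hdiag, ← mul_sum]; ring
    _ ≤ κ * ∑ n ∈ Icc 1 m, v n * ∑ k ∈ Icc 1 n, c k * v k :=
        mul_le_mul_of_nonneg_left (half_sum_mul_sq_le_sum_mul_sum_Icc c v hc0 hc) hκ
    _ = _ := by simp only [mul_sum, hoff]

lemma half_sum_aK_mul_sq_le {α : ℝ} (hα : 0 < α) (hα1 : α < 1) {t : ℕ → ℝ} {m : ℕ}
    (ht : StrictMonoOn t (Set.Iic m)) (x : ℕ → ℝ) :
    (1 / 2) * ∑ n ∈ Icc 1 m, aK α t n n * x n ^ 2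
      ≤ ∑ n ∈ Icc 1 m, x n * ∑ k ∈ Icc 1 n, aK α t n k * x k := by
  have hrep : ∀ n ∈ Icc 1 m, ∀ k ∈ Icc 1 n,
      IntegrableOn (aKDensity α t n k) (Set.Ioi 0) ∧
      ∫ l in Set.Ioi (0 : ℝ), aKDensity α t n k l = aK α t n k := by
    intro n hn k hk
    simp only [mem_Icc] at hn hk
    exact aKDensity_integrableOn_and_integral_eq hα hα1
      (ht (by simp; omega) (by simp; omega) (by omega))
      (ht.monotoneOn (by simp; omega) (by simp; omega) hk.2)
  have hself : ∀ n ∈ Icc 1 m, n ∈ Icc 1 n := fun n hn => by simp_all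
  have hoff : ∫ l in Set.Ioi (0 : ℝ), ∑ n ∈ Icc 1 m, x n * ∑ k ∈ Icc 1 n, aKDensity α t n k l * x k
      = ∑ n ∈ Icc 1 m, x n * ∑ k ∈ Icc 1 n, aK α t n k * x k := by
    rw [integral_finsetSum _ fun n hn =>
      (integrable_finsetSum _ fun k hk => (hrep n hn k hk).1.mul_const _).const_mul _]
    refine sum_congr rfl fun n hn => ?_
    rw [integral_const_mul, integral_finsetSum _ fun k hk => (hrep n hn k hk).1.mul_const _]
    congr 1
    exact sum_congr rfl fun k hk => by rw [integral_mul_const, (hrep n hn k hk).2]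
  have hdiag : ∫ l in Set.Ioi (0 : ℝ), (1 / 2) * ∑ n ∈ Icc 1 m, aKDensity α t n n l * x n ^ 2
      = (1 / 2) * ∑ n ∈ Icc 1 m, aK α t n n * x n ^ 2 := by
    rw [integral_const_mul, integral_finsetSum _ fun n hn =>
      (hrep n hn n (hself n hn)).1.mul_const _]
    congr 1
    exact sum_congr rfl fun n hn => by rw [integral_mul_const, (hrep n hn n (hself n hn)).2]
  have hint_diag : IntegrableOn (fun l => (1 / 2) * ∑ n ∈ Icc 1 m, aKDensity α t n n l * x n ^ 2)
      (Set.Ioi 0) :=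
    (integrable_finsetSum _ fun n hn => (hrep n hn n (hself n hn)).1.mul_const _).const_mul _
  have hint_off : IntegrableOn
      (fun l => ∑ n ∈ Icc 1 m, x n * ∑ k ∈ Icc 1 n, aKDensity α t n k l * x k) (Set.Ioi 0) :=
    integrable_finsetSum _ fun n hn =>
      (integrable_finsetSum _ fun k hk => (hrep n hn k hk).1.mul_const _).const_mul _
  rw [← hoff, ← hdiag]
  exact setIntegral_mono_on hint_diag hint_off measurableSet_Ioi fun l hl =>
    half_sum_aKDensity_mul_sq_le hα.le hα1.le ht x (le_of_lt hl)

lemma half_sum_aK_dInner_le {M : ℕ} [NeZero M] {h α : ℝ} (hα : 0 < α) (hα1 : α < 1) {t : ℕ → ℝ}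
    {m : ℕ} (ht : StrictMonoOn t (Set.Iic m)) (w : ℕ → ZMod M → ZMod M → ℝ) :
    (1 / 2) * ∑ n ∈ Icc 1 m, aK α t n n * dInner M h (w n) (w n)
      ≤ ∑ n ∈ Icc 1 m, ∑ k ∈ Icc 1 n, aK α t n k * dInner M h (w k) (w n) := by
  have hswap : ∀ (s : Finset ℕ) (F : ℕ → ZMod M → ZMod M → ℝ),
      ∑ n ∈ s, ∑ i, ∑ j, F n i j = ∑ i, ∑ j, ∑ n ∈ s, F n i j := fun s F => by
    rw [sum_comm]; exact sum_congr rfl fun i _ => sum_comm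
  calc (1 / 2) * ∑ n ∈ Icc 1 m, aK α t n n * dInner M h (w n) (w n)
      = h ^ 2 * ∑ i, ∑ j, (1 / 2) * ∑ n ∈ Icc 1 m, aK α t n n * w n i j ^ 2 := by
        simp only [dInner, mul_sum]
        rw [hswap]
        exact sum_congr rfl fun i _ => sum_congr rfl fun j _ =>
          sum_congr rfl fun n _ => by ring
    _ ≤ h ^ 2 * ∑ i, ∑ j, ∑ n ∈ Icc 1 m, w n i j * ∑ k ∈ Icc 1 n, aK α t n k * w k i j := by
        gcongr with i _ j _
        exact half_sum_aK_mul_sq_le hα hα1 ht (w · i j)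
    _ = _ := by
        simp only [dInner, mul_sum]
        rw [← hswap]
        refine sum_congr rfl fun n _ => ?_
        rw [← hswap]
        exact sum_congr rfl fun k _ => sum_congr rfl fun i _ =>
          sum_congr rfl fun j _ => by ring

end L1QuadraticForm

lemma sqrt_add_sqrt_le_sqrt_two_mul_add {a b : ℝ} (ha : 0 ≤ a) (hb : 0 ≤ b) :
    √a + √b ≤ √(2 * a + 2 * b) := by
  rw [Real.le_sqrt (by positivity) (by positivity)]
  nlinarith [add_sq_le (a := √a) (b := √b), Real.sq_sqrt ha, Real.sq_sqrt hb]

theorem dEnergy_le_dEnergy_zero {M : ℕ} [NeZero M] {h g ε : ℝ} (hε : 0 < ε) {α : ℝ}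
    (hα : 0 < α) (hα1 : α < 1) {t : ℕ → ℝ} {N : ℕ} (ht : StrictMonoOn t (Set.Iic N))
    (hτ : ∀ k, 1 ≤ k → k ≤ N →
      (t k - t (k - 1)) ^ α ≤ 3 / (Real.Gamma (2 - α) * (4 * g ^ 2 + 3 * ε)))
    {u : ℕ → ZMod M → ZMod M → ℝ}
    (hscheme : ∀ n, 1 ≤ n → n ≤ N →
      ∑ k ∈ Icc 1 n, aK α t n k • (u k - u (k - 1)) = -muSH M h g ε (u n))
    {m : ℕ} (hmN : m ≤ N) :
    dEnergy M h g ε (u m) ≤ dEnergy M h g ε (u 0) := by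
  set w : ℕ → ZMod M → ZMod M → ℝ := fun n => u n - u (n - 1)
  have hstep : ∀ n ∈ Icc 1 m, dEnergy M h g ε (u n) - dEnergy M h g ε (u (n - 1))
      ≤ -∑ k ∈ Icc 1 n, aK α t n k * dInner M h (w k) (w n)
        + (g ^ 2 / 3 + ε) / 2 * dInner M h (w n) (w n) := by
    intro n hn
    rw [mem_Icc] at hn
    have := dEnergy_sub_le (h := h) g ε (u n) (u (n - 1))
    rwa [← neg_neg (muSH M h g ε (u n)), ← hscheme n hn.1 (by omega), dInner_neg_left,
      dInner_sum_left, sum_congr rfl fun k _ => dInner_smul_left _ _ _] at this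
  have haK : ∀ n ∈ Icc 1 m, g ^ 2 / 3 + ε ≤ aK α t n n := by
    intro n hn
    rw [mem_Icc] at hn
    have := div_three_le_aK_self hα1 (ht (by simp; omega) (by simp; omega) (by omega))
      (by positivity) (hτ n hn.1 (by omega))
    nlinarith [sq_nonneg g]
  have hdiag : ∑ n ∈ Icc 1 m, (g ^ 2 / 3 + ε) / 2 * dInner M h (w n) (w n)
      ≤ (1 / 2) * ∑ n ∈ Icc 1 m, aK α t n n * dInner M h (w n) (w n) := by
    rw [mul_sum]
    refine sum_le_sum fun n hn => ?_
    nlinarith [mul_le_mul_of_nonneg_right (haK n hn) (dInner_self_nonneg (h := h) (w n))]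
  have hform := half_sum_aK_dInner_le (h := h) hα hα1 (ht.mono (Set.Iic_subset_Iic.2 hmN)) w
  have htel := sum_le_sum hstep
  rw [sum_Icc_one_sub_pred (fun n => dEnergy M h g ε (u n)), sum_add_distrib, sum_neg_distrib]
    at htel
  linarith

theorem numerical_solution_Linfty_bounded_general
    (L : ℝ) (M : ℕ) [NeZero M]
    (g ε : ℝ) (hε : 0 < ε)
    (C : ℝ) (hC : 0 < C)
    (hembed : ∀ v : ZMod M → ZMod M → ℝ, ∀ i j : ZMod M,
      |v i j| ≤ C * (dNorm M (L / M) v + dNorm M (L / M) (opA M (L / M) v)))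
    (N : ℕ) (α : ℝ) (hα : 0 < α ∧ α < 1)
    (t : ℕ → ℝ)
    (htmono : ∀ k, k < N → t k < t (k + 1))
    (hτ : ∀ k, 1 ≤ k → k ≤ N →
      (t k - t (k - 1)) ^ α ≤ 3 / (Real.Gamma (2 - α) * (4 * g ^ 2 + 3 * ε)))
    (u : ℕ → ZMod M → ZMod M → ℝ)
    (hscheme : ∀ n, 1 ≤ n → n ≤ N →
      (∑ k ∈ Finset.Icc 1 n, aK α t n k • (u k - u (k - 1)))
        = -(muSH M (L / M) g ε (u n))) :
    ∀ n, 1 ≤ n → n ≤ N → ∀ i j : ZMod M,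
      |u n i j| ≤
        C * Real.sqrt (4 * dEnergy M (L / M) g ε (u 0)
          + (9 / 7) * (1 + ε + g ^ 2) ^ 2 * L ^ 2) := by
  intro n _ hnN i j
  have hdecay := dEnergy_le_dEnergy_zero hε hα.1 hα.2 (strictMonoOn_Iic_of_lt_succ htmono)
    hτ hscheme hnN
  have hlower := two_dInner_add_le_dEnergy (h := L / M) g ε (u n)
  rw [mul_div_cancel₀ L (Nat.cast_ne_zero.2 (NeZero.ne M))] at hlower
  calc |u n i j| ≤ C * (dNorm M (L / M) (u n) + dNorm M (L / M) (opA M (L / M) (u n))) :=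
        hembed (u n) i j
    _ ≤ C * √(2 * dInner M (L / M) (u n) (u n)
          + 2 * dInner M (L / M) (opA M (L / M) (u n)) (opA M (L / M) (u n))) := by
        gcongr
        exact sqrt_add_sqrt_le_sqrt_two_mul_add (dInner_self_nonneg _) (dInner_self_nonneg _)
    _ ≤ _ := mul_le_mul_of_nonneg_left (Real.sqrt_le_sqrt (by linarith)) hC.le

/-- Lemma 3.3, L∞ boundedness: under the step restriction
`τ^α ≤ 3/(Γ(2-α)(4g²+3ε))`, any solution of the variable-step L1 scheme satisfies
`‖uⁿ‖_∞ ≤ C̃_Ω √(4E[u⁰] + (9/7)(1+ε+g²)² L²)` for all `n ≥ 1`, where `C̃_Ω` is the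
constant of the discrete embedding inequality. -/
theorem numerical_solution_Linfty_bounded
    (L : ℝ) (hL : 0 < L) (M : ℕ) [NeZero M] (hM : 2 ≤ M)
    (g ε : ℝ) (hg : 0 ≤ g) (hε : 0 < ε)
    (C : ℝ) (hC : 0 < C)
    (hembed : ∀ v : ZMod M → ZMod M → ℝ, ∀ i j : ZMod M,
      |v i j| ≤ C * (dNorm M (L / M) v + dNorm M (L / M) (opA M (L / M) v)))
    (N : ℕ) (α T : ℝ) (hα : 0 < α ∧ α < 1)
    (t : ℕ → ℝ) (ht0 : t 0 = 0) (htN : t N = T)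
    (htmono : ∀ k, k < N → t k < t (k + 1))
    (hτ : ∀ k, 1 ≤ k → k ≤ N →
      (t k - t (k - 1)) ^ α ≤ 3 / (Real.Gamma (2 - α) * (4 * g ^ 2 + 3 * ε)))
    (u : ℕ → ZMod M → ZMod M → ℝ)
    (hscheme : ∀ n, 1 ≤ n → n ≤ N →
      (∑ k ∈ Finset.Icc 1 n, aK α t n k • (u k - u (k - 1)))
        = -(muSH M (L / M) g ε (u n))) :
    ∀ n, 1 ≤ n → n ≤ N → ∀ i j : ZMod M,
      |u n i j| ≤
        C * Real.sqrt (4 * dEnergy M (L / M) g ε (u 0)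
          + (9 / 7) * (1 + ε + g ^ 2) ^ 2 * L ^ 2) :=
  numerical_solution_Linfty_bounded_general L M g ε hε C hC hembed N α hα t htmono hτ u hscheme
end

section
/- (Asymptotic compatibility of the kernels as α → 1⁻.) Fix a mesh 0 = t_0 < t_1 < ⋯ < t_N = T and fix 1 ≤ n ≤ N. Regarding the L1 kernels a^{(n)}_{n−k}(α) and the DCC kernels p^{(n)}_{n−j}(α) as functions of the fractional order α ∈ (0,1), one has lim_{α→1⁻} a^{(n)}_{0}(α) = 1/τ_n, lim_{α→1⁻} a^{(n)}_{n−k}(α) = 0 for every 1 ≤ k ≤ n−1, and consequently lim_{α→1⁻} p^{(n)}_{n−j}(α) = τ_j for every 1 ≤ j ≤ n. -/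
open scoped BigOperators

open Filter Topology
/-! On `α < 1` the L1 kernel has the closed form
`a^{(n)}_{n-k} = ((t_n - t_{k-1})^{1-α} - (t_n - t_k)^{1-α}) / (Γ(2-α) τ_k)`, so as `α → 1⁻` it
tends to `1/τ_n` on the diagonal (where `0^{1-α} = 0`) and to `(1 - 1)/τ_k = 0` off it. In the
recursion for `p^{(n)}_{m+1}` every summand then vanishes in the limit except
`(a^{(n-m)}_0 - a^{(n-m)}_1) p^{(n)}_m → τ_{n-m}⁻¹ τ_{n-m} = 1`, so by strong induction
`p^{(n)}_m → τ_{n-m}`, the prefactor `1/a^{(n-m-1)}_0` supplying `τ_{n-m-1}`. -/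

open Set

lemma tendsto_Gamma_two_sub : Tendsto (fun α : ℝ => Real.Gamma (2 - α)) (𝓝 1) (𝓝 1) := by
  have hΓ : ContinuousAt Real.Gamma 1 :=
    (Real.differentiableOn_Gamma_Ioi.differentiableAt (Ioi_mem_nhds one_pos)).continuousAt
  have h2 : Tendsto (fun α : ℝ => 2 - α) (𝓝 1) (𝓝 1) :=
    (continuous_const.sub continuous_id).tendsto' 1 1 (by norm_num)
  have h := hΓ.tendsto.comp h2
  rwa [Real.Gamma_one] at h

lemma tendsto_rpow_one_sub {x : ℝ} (hx : x ≠ 0) :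
    Tendsto (fun α : ℝ => x ^ (1 - α)) (𝓝 1) (𝓝 1) := by
  have h : Tendsto (fun α : ℝ => 1 - α) (𝓝 1) (𝓝 0) :=
    (continuous_const.sub continuous_id).tendsto' 1 0 (by norm_num)
  simpa using tendsto_const_nhds.rpow h (Or.inl hx)

lemma integral_omegaK_one_sub {α : ℝ} (hα : α < 1) (a b c : ℝ) :
    ∫ s in a..b, omegaK (1 - α) (c - s) =
      ((c - a) ^ (1 - α) - (c - b) ^ (1 - α)) / Real.Gamma (2 - α) := by
  have hΓ : Real.Gamma (2 - α) = (1 - α) * Real.Gamma (1 - α) := by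
    rw [show 2 - α = (1 - α) + 1 by ring, Real.Gamma_add_one (by linarith)]
  have hΓpos : 0 < Real.Gamma (1 - α) := Real.Gamma_pos_of_pos (by linarith)
  simp only [omegaK, sub_sub_cancel_left]
  rw [intervalIntegral.integral_div, intervalIntegral.integral_comp_sub_left (fun x => x ^ (-α)),
    integral_rpow (Or.inl (by linarith)), hΓ, show -α + 1 = 1 - α by ring]
  have : 1 - α ≠ 0 := by linarith
  field_simp

section Kernels

variable {α : ℝ} {t : ℕ → ℝ} {n k : ℕ}

lemma aK_eq (hα : α < 1) :
    aK α t n k = ((t n - t (k - 1)) ^ (1 - α) - (t n - t k) ^ (1 - α)) /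
      (Real.Gamma (2 - α) * (t k - t (k - 1))) := by
  rw [aK, integral_omegaK_one_sub hα, div_mul_div_comm, one_mul, mul_comm]

lemma tendsto_aK_self (h : t (n - 1) ≠ t n) :
    Tendsto (fun α => aK α t n n) (𝓝[<] 1) (𝓝 (1 / (t n - t (n - 1)))) := by
  have hτ : t n - t (n - 1) ≠ 0 := sub_ne_zero.mpr h.symm
  have hEq : (fun α => aK α t n n) =ᶠ[𝓝[<] 1]
      fun α => (t n - t (n - 1)) ^ (1 - α) / (Real.Gamma (2 - α) * (t n - t (n - 1))) := by
    filter_upwards [self_mem_nhdsWithin] with α (hα : α < 1)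
    rw [aK_eq hα, sub_self, Real.zero_rpow (by linarith), sub_zero]
  rw [tendsto_congr' hEq]
  have hden := (tendsto_Gamma_two_sub.mul (tendsto_const_nhds (x := t n - t (n - 1))))
  rw [one_mul] at hden
  exact ((tendsto_rpow_one_sub hτ).div hden hτ).mono_left nhdsWithin_le_nhds

lemma tendsto_aK_zero (hk : t (k - 1) ≠ t k) (hnk : t n ≠ t k) (hnk' : t n ≠ t (k - 1)) :
    Tendsto (fun α => aK α t n k) (𝓝[<] 1) (𝓝 0) := by
  have hEq : (fun α => aK α t n k) =ᶠ[𝓝[<] 1]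
      fun α => ((t n - t (k - 1)) ^ (1 - α) - (t n - t k) ^ (1 - α)) /
        (Real.Gamma (2 - α) * (t k - t (k - 1))) := by
    filter_upwards [self_mem_nhdsWithin] with α (hα : α < 1)
    exact aK_eq hα
  rw [tendsto_congr' hEq]
  have hnum := (tendsto_rpow_one_sub (sub_ne_zero.mpr hnk')).sub
    (tendsto_rpow_one_sub (sub_ne_zero.mpr hnk))
  have hden := (tendsto_Gamma_two_sub.mul (tendsto_const_nhds (x := t k - t (k - 1))))
  rw [sub_self] at hnum
  rw [one_mul] at hden
  rw [← zero_div (t k - t (k - 1))]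
  exact (hnum.div hden (sub_ne_zero.mpr hk.symm)).mono_left nhdsWithin_le_nhds

lemma tendsto_aK_zero_of_injOn (ht : InjOn t (Iic n)) (hk : 1 ≤ k) (hkn : k < n) :
    Tendsto (fun α => aK α t n k) (𝓝[<] 1) (𝓝 0) := by
  have hne : ∀ i j, i ≤ n → j ≤ n → i ≠ j → t i ≠ t j :=
    fun i j hi hj => (ht.ne_iff hi hj).mpr
  exact tendsto_aK_zero (hne _ _ (by omega) (by omega) (by omega))
    (hne _ _ le_rfl (by omega) (by omega)) (hne _ _ le_rfl (by omega) (by omega))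

lemma tendsto_one_div_aK_self (h : t (n - 1) ≠ t n) :
    Tendsto (fun α => 1 / aK α t n n) (𝓝[<] 1) (𝓝 (t n - t (n - 1))) := by
  have hτ : 1 / (t n - t (n - 1)) ≠ 0 := one_div_ne_zero (sub_ne_zero.mpr h.symm)
  have hlim := (tendsto_const_nhds (x := (1 : ℝ))).div (tendsto_aK_self h) hτ
  rwa [one_div_one_div] at hlim

lemma pK_zero : pK α t n 0 = 1 / aK α t n n := by
  rw [pK]

lemma pK_succ (m : ℕ) :
    pK α t n (m + 1) = 1 / aK α t (n - m - 1) (n - m - 1) *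
      ∑ i ∈ Finset.range (m + 1),
        (aK α t (n - i) (n - m) - aK α t (n - i) (n - m - 1)) * pK α t n i := by
  rw [pK, Finset.sum_attach (Finset.range (m + 1))
    (fun i => (aK α t (n - i) (n - m) - aK α t (n - i) (n - m - 1)) * pK α t n i)]

theorem tendsto_pK (ht : InjOn t (Iic n)) {m : ℕ} (hm : m < n) :
    Tendsto (fun α => pK α t n m) (𝓝[<] 1) (𝓝 (t (n - m) - t (n - m - 1))) := by
  have hne : ∀ i j, i ≤ n → j ≤ n → i ≠ j → t i ≠ t j :=
    fun i j hi hj => (ht.ne_iff hi hj).mpr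
  have hoff : ∀ i k, 1 ≤ k → k < i → i ≤ n →
      Tendsto (fun α => aK α t i k) (𝓝[<] 1) (𝓝 0) :=
    fun i k hk hki hin => tendsto_aK_zero_of_injOn (ht.mono (Iic_subset_Iic.mpr hin)) hk hki
  induction m using Nat.strong_induction_on with
  | _ m ih =>
  cases m with
  | zero =>
    simpa only [pK_zero, Nat.sub_zero] using
      tendsto_one_div_aK_self (hne _ _ (by omega) le_rfl (by omega))
  | succ m =>
    have hpre := tendsto_one_div_aK_self (t := t) (n := n - m - 1)
      (hne _ _ (by omega) (by omega) (by omega))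
    have hlast : Tendsto (fun α => (aK α t (n - m) (n - m) - aK α t (n - m) (n - m - 1)) *
        pK α t n m) (𝓝[<] 1) (𝓝 1) := by
      have hτ : t (n - m - 1) ≠ t (n - m) := hne _ _ (by omega) (by omega) (by omega)
      have h := ((tendsto_aK_self hτ).sub
        (hoff (n - m) (n - m - 1) (by omega) (by omega) (by omega))).mul
        (ih m (by omega) (by omega))
      rwa [sub_zero, one_div_mul_cancel (sub_ne_zero.mpr hτ.symm)] at h
    have hrest : Tendsto (fun α => ∑ i ∈ Finset.range m,
        (aK α t (n - i) (n - m) - aK α t (n - i) (n - m - 1)) * pK α t n i)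
        (𝓝[<] 1) (𝓝 0) := by
      have h := tendsto_finsetSum (Finset.range m) fun i hi => by
        have hi : i < m := Finset.mem_range.mp hi
        exact ((hoff (n - i) (n - m) (by omega) (by omega) (by omega)).sub
          (hoff (n - i) (n - m - 1) (by omega) (by omega) (by omega))).mul
          (ih i (by omega) (by omega))
      simpa only [sub_zero, zero_mul, Finset.sum_const_zero] using h
    have h := hpre.mul (hrest.add hlast)
    rw [zero_add, mul_one] at h
    simp only [pK_succ, Finset.sum_range_succ]
    rwa [show n - (m + 1) = n - m - 1 by omega]

end Kernels

theorem kernels_asymptotic_compatibility_general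
    (N : ℕ)
    (t : ℕ → ℝ)
    (htmono : ∀ k, k < N → t k < t (k + 1))
    (n : ℕ) (hn1 : 1 ≤ n) (hnN : n ≤ N) :
    Tendsto (fun α : ℝ => aK α t n n) (𝓝[Set.Ioo (0 : ℝ) 1] 1)
        (𝓝 (1 / (t n - t (n - 1)))) ∧
      (∀ k, 1 ≤ k → k ≤ n - 1 →
        Tendsto (fun α : ℝ => aK α t n k) (𝓝[Set.Ioo (0 : ℝ) 1] 1) (𝓝 0)) ∧
      (∀ j, 1 ≤ j → j ≤ n →
        Tendsto (fun α : ℝ => pK α t n (n - j)) (𝓝[Set.Ioo (0 : ℝ) 1] 1)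
          (𝓝 (t j - t (j - 1)))) := by
  have hinj : InjOn t (Iic n) :=
    (strictMonoOn_Iic_of_lt_succ htmono).injOn.mono (Iic_subset_Iic.mpr hnN)
  have hfilter : 𝓝[Ioo (0 : ℝ) 1] 1 ≤ 𝓝[<] 1 := nhdsWithin_mono _ Ioo_subset_Iio_self
  have hτn : t (n - 1) ≠ t n :=
    (hinj.ne_iff (mem_Iic.mpr (by omega)) (mem_Iic.mpr le_rfl)).mpr (by omega)
  refine ⟨(tendsto_aK_self hτn).mono_left hfilter,
    fun k hk hkn => (tendsto_aK_zero_of_injOn hinj hk (by omega)).mono_left hfilter,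
    fun j hj hjn => ?_⟩
  have h := tendsto_pK hinj (m := n - j) (by omega)
  rw [Nat.sub_sub_self hjn] at h
  exact h.mono_left hfilter

/-- asymptotic compatibility of the kernels as α → 1⁻: on a fixed mesh,
`a^{(n)}_0(α) → 1/τ_n`, `a^{(n)}_{n-k}(α) → 0` for `1 ≤ k ≤ n-1`, and
`p^{(n)}_{n-j}(α) → τ_j` for `1 ≤ j ≤ n`, as `α → 1⁻` within `(0,1)`. -/
theorem kernels_asymptotic_compatibility
    (N : ℕ) (T : ℝ)
    (t : ℕ → ℝ) (ht0 : t 0 = 0) (htN : t N = T)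
    (htmono : ∀ k, k < N → t k < t (k + 1))
    (n : ℕ) (hn1 : 1 ≤ n) (hnN : n ≤ N) :
    Tendsto (fun α : ℝ => aK α t n n) (𝓝[Set.Ioo (0 : ℝ) 1] 1)
        (𝓝 (1 / (t n - t (n - 1)))) ∧
      (∀ k, 1 ≤ k → k ≤ n - 1 →
        Tendsto (fun α : ℝ => aK α t n k) (𝓝[Set.Ioo (0 : ℝ) 1] 1) (𝓝 0)) ∧
      (∀ j, 1 ≤ j → j ≤ n →
        Tendsto (fun α : ℝ => pK α t n (n - j)) (𝓝[Set.Ioo (0 : ℝ) 1] 1)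
          (𝓝 (t j - t (j - 1)))) :=
  kernels_asymptotic_compatibility_general N t htmono n hn1 hnN
end
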